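/- Let G be a finite group and x, y ∈ G be two elements of the power graph of G. If x and y are open twins (N(x) = N(y)) and x ≠ y, then x and y are involutions and N(x) = N(y) = {1}. -/

import Mathlib

/-- The power graph of a group: distinct `x, y` are adjacent iff one is a
positive power of the other. -/
def powerGraph (G : Type*) [Group G] : SimpleGraph G :=
  SimpleGraph.fromRel (fun x y => ∃ m : ℕ, 0 < m ∧ x = y ^ m)

/-- The closed neighbourhood of a vertex in the power graph. -/
def closedNbhd {G : Type*} [Group G] (x : G) : Set G :=
  insert x ((powerGraph G).neighborSet x)

/-!
Twins `x ≠ y` cannot be adjacent, so neither is `1` (which is adjacent to everything). Since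
`x⁻¹` generates the same cyclic subgroup as `x`, it has the same neighbours as `x` apart from
`x` itself; if `x⁻¹ ≠ x` then `x⁻¹` would be a common neighbour forcing `x` and `y` to be
adjacent, so `x` is an involution. A neighbour `z ≠ 1` of `x` is not in `⟨x⟩ = {1, x}`, so
`x ∈ ⟨z⟩`, and likewise `y ∈ ⟨z⟩`: two involutions in a cyclic group, hence `x = y`.
-/

open Subgroup

theorem SimpleGraph.not_adj_of_neighborSet_eq {V : Type*} (Γ : SimpleGraph V) {x y : V}
    (h : Γ.neighborSet x = Γ.neighborSet y) : ¬ Γ.Adj x y := fun hxy =>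
  Γ.irrefl (show y ∈ Γ.neighborSet y from h ▸ hxy)

theorem IsCyclic.eq_of_orderOf_eq_two {α : Type*} [Group α] [Finite α] [IsCyclic α] {a b : α}
    (ha : orderOf a = 2) (hb : orderOf b = 2) : a = b := by
  classical
  have := Fintype.ofFinite α
  by_contra hab
  have ha1 : a ≠ 1 := fun h => by simp [h] at ha
  have hb1 : b ≠ 1 := fun h => by simp [h] at hb
  have hsub : ({1, a, b} : Finset α) ⊆ Finset.univ.filter (· ^ 2 = 1) := by
    intro g hg
    simp only [Finset.mem_insert, Finset.mem_singleton] at hg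
    rw [Finset.mem_filter_univ]
    rcases hg with rfl | rfl | rfl
    exacts [one_pow 2, ha ▸ pow_orderOf_eq_one g, hb ▸ pow_orderOf_eq_one g]
  have hcard : ({1, a, b} : Finset α).card = 3 := by
    rw [Finset.card_insert_of_notMem (by simp [ha1.symm, hb1.symm]),
      Finset.card_pair hab]
  have := (Finset.card_le_card hsub).trans (IsCyclic.card_pow_eq_one_le two_pos)
  omega

theorem eq_of_orderOf_eq_two_of_mem_zpowers {G : Type*} [Group G] [Finite G] {x y z : G}
    (hx : x ∈ zpowers z) (hy : y ∈ zpowers z) (hx2 : orderOf x = 2) (hy2 : orderOf y = 2) :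
    x = y :=
  congrArg Subtype.val <| IsCyclic.eq_of_orderOf_eq_two (a := (⟨x, hx⟩ : zpowers z))
    (b := ⟨y, hy⟩) (by rwa [Subgroup.orderOf_mk]) (by rwa [Subgroup.orderOf_mk])

theorem eq_one_or_eq_of_mem_zpowers_of_orderOf_eq_two {G : Type*} [Group G] {x z : G}
    (hx : orderOf x = 2) (hz : z ∈ zpowers x) : z = 1 ∨ z = x := by
  obtain ⟨k, rfl⟩ := mem_zpowers_iff.mp hz
  rw [← zpow_mod_orderOf, hx]
  rcases Int.emod_two_eq k with h | h <;> simp [h]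

section PowerGraph

variable {G : Type*} [Group G] [Finite G]

theorem exists_pos_pow_eq_iff_mem_zpowers {a b : G} :
    (∃ m : ℕ, 0 < m ∧ a = b ^ m) ↔ a ∈ zpowers b := by
  constructor
  · rintro ⟨m, -, rfl⟩
    exact npow_mem_zpowers b m
  · intro h
    obtain ⟨k, rfl⟩ := mem_powers_iff_mem_zpowers.mpr h
    exact ⟨k + orderOf b, by have := orderOf_pos b; omega,
      by rw [pow_add, pow_orderOf_eq_one, mul_one]⟩

theorem powerGraph_adj_iff {a b : G} :
    (powerGraph G).Adj a b ↔ a ≠ b ∧ (a ∈ zpowers b ∨ b ∈ zpowers a) := by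
  simp only [powerGraph, SimpleGraph.fromRel_adj, exists_pos_pow_eq_iff_mem_zpowers]

theorem powerGraph_adj_one {a : G} (ha : a ≠ 1) : (powerGraph G).Adj a 1 :=
  powerGraph_adj_iff.mpr ⟨ha, Or.inr (one_mem _)⟩

theorem mem_zpowers_of_powerGraph_adj_of_orderOf_eq_two {x z : G} (hx : orderOf x = 2)
    (hxz : (powerGraph G).Adj x z) (hz : z ≠ 1) : x ∈ zpowers z := by
  obtain ⟨hne, hx_mem | hz_mem⟩ := powerGraph_adj_iff.mp hxz
  · exact hx_mem
  · rcases eq_one_or_eq_of_mem_zpowers_of_orderOf_eq_two hx hz_mem with h | h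
    exacts [absurd h hz, absurd h.symm hne]

variable {x y : G} (hxy : x ≠ y)
  (h : (powerGraph G).neighborSet x = (powerGraph G).neighborSet y)
include hxy h

theorem ne_one_of_neighborSet_eq : x ≠ 1 := by
  rintro rfl
  exact (powerGraph G).not_adj_of_neighborSet_eq h (powerGraph_adj_one hxy.symm).symm

theorem orderOf_eq_two_of_neighborSet_eq : orderOf x = 2 := by
  refine orderOf_eq_prime ?_ (ne_one_of_neighborSet_eq hxy h)
  by_contra hx2
  have hinv : x ≠ x⁻¹ := fun e => hx2 (by rwa [sq, mul_eq_one_iff_eq_inv])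
  have hadj_x : (powerGraph G).Adj x x⁻¹ :=
    powerGraph_adj_iff.mpr ⟨hinv, Or.inr (inv_mem (mem_zpowers x))⟩
  have hadj_y : (powerGraph G).Adj y x⁻¹ := show x⁻¹ ∈ (powerGraph G).neighborSet y from h ▸ hadj_x
  obtain ⟨-, hrel⟩ := powerGraph_adj_iff.mp hadj_y
  rw [zpowers_inv, inv_mem_iff] at hrel
  exact (powerGraph G).not_adj_of_neighborSet_eq h (powerGraph_adj_iff.mpr ⟨hxy, hrel.symm⟩)

theorem neighborSet_eq_singleton_one_of_neighborSet_eq :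
    (powerGraph G).neighborSet x = {1} := by
  ext z
  simp only [SimpleGraph.mem_neighborSet, Set.mem_singleton_iff]
  refine ⟨fun hxz => ?_, fun hz => hz ▸ powerGraph_adj_one (ne_one_of_neighborSet_eq hxy h)⟩
  by_contra hz
  have hyz : (powerGraph G).Adj y z := show z ∈ (powerGraph G).neighborSet y from h ▸ hxz
  have hx2 := orderOf_eq_two_of_neighborSet_eq hxy h
  have hy2 := orderOf_eq_two_of_neighborSet_eq hxy.symm h.symm
  exact hxy <| eq_of_orderOf_eq_two_of_mem_zpowers
    (mem_zpowers_of_powerGraph_adj_of_orderOf_eq_two hx2 hxz hz)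
    (mem_zpowers_of_powerGraph_adj_of_orderOf_eq_two hy2 hyz hz) hx2 hy2

end PowerGraph

theorem open_twins_are_involutions {G : Type*} [Group G] [Finite G]
    (x y : G) (hxy : x ≠ y)
    (h : (powerGraph G).neighborSet x = (powerGraph G).neighborSet y) :
    orderOf x = 2 ∧ orderOf y = 2 ∧
      (powerGraph G).neighborSet x = {1} ∧
      (powerGraph G).neighborSet y = {1} :=
  ⟨orderOf_eq_two_of_neighborSet_eq hxy h, orderOf_eq_two_of_neighborSet_eq hxy.symm h.symm,
    neighborSet_eq_singleton_one_of_neighborSet_eq hxy h,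
    neighborSet_eq_singleton_one_of_neighborSet_eq hxy.symm h.symm⟩
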